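/- arXiv:2104.06502 — 2 statements merged into one kernel-verified Lean document; each statement's English description precedes it below -/
import Mathlib

section
/- Let $X_1, \dots, X_N$ be non-negative real numbers and let $c > 0$. Then the number of indices $n \in \{1,\dots,N\}$ for which $X_n \geq c \sum_{j=n+1}^N X_j$ is at most $\max\left\{1,\; \frac{\log\left(\frac{1}{X_N}\max_{n \in \{1,\dots,N\}} X_n\right)}{\log(c+1)} - \frac{\log c}{\log(c+1)} + 2\right\}$ (where the bound is interpreted as trivially true if $X_N = 0$). -/
open scoped ENNReal

/-- If `X 1, ..., X N` are nonnegative reals and `c > 0`, then the number of indices `n`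
with `X n ≥ c * ∑_{j=n+1}^N X j` is at most
`max 1 (log((max X)/X_N)/log(c+1) - log c / log(c+1) + 2)`, provided `X_N ≠ 0`. -/
theorem seq_sum_count (N : ℕ) (hN : 0 < N) (X : Fin N → ℝ) (hXpos : ∀ n, 0 ≤ X n)
    (c : ℝ) (hc : 0 < c) (hXN : X ⟨N - 1, Nat.sub_lt hN Nat.one_pos⟩ ≠ 0) :
    ((Finset.univ.filter fun n : Fin N => c * ∑ j ∈ Finset.Ioi n, X j ≤ X n).card : ℝ) ≤
      max 1 (Real.log ((Finset.univ.sup' ⟨⟨0, hN⟩, Finset.mem_univ _⟩ X) /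
          X ⟨N - 1, Nat.sub_lt hN Nat.one_pos⟩) / Real.log (c + 1)
        - Real.log c / Real.log (c + 1) + 2) := by
  classical
  set last : Fin N := ⟨N - 1, Nat.sub_lt hN Nat.one_pos⟩ with hlast
  set A : Finset (Fin N) :=
    Finset.univ.filter fun n : Fin N => c * ∑ j ∈ Finset.Ioi n, X j ≤ X n with hA
  set M : ℝ := Finset.univ.sup' ⟨⟨0, hN⟩, Finset.mem_univ _⟩ X with hM
  have hXl : 0 < X last := lt_of_le_of_ne (hXpos last) (Ne.symm hXN)
  have hlastle : ∀ n : Fin N, n ≤ last := by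
    intro n
    have h := n.isLt
    exact Fin.le_def.mpr (by show n.1 ≤ N - 1; omega)
  -- key chain lemma
  have key : ∀ j : ℕ, ∀ n : Fin N, n ∈ A → j ≤ (A ∩ Finset.Ioi n).card →
      (c + 1) ^ j * X last ≤ ∑ i ∈ Finset.Ici n, X i := by
    intro j
    induction j with
    | zero =>
      intro n _ _
      simpa using Finset.single_le_sum (fun i _ => hXpos i)
        (Finset.mem_Ici.mpr (hlastle n))
    | succ j ih =>
      intro n hnA hcard
      have hne : (A ∩ Finset.Ioi n).Nonempty := Finset.card_pos.mp (by omega)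
      set n' := (A ∩ Finset.Ioi n).min' hne with hn'
      have hn'mem : n' ∈ A ∩ Finset.Ioi n := Finset.min'_mem _ _
      have hn'A : n' ∈ A := (Finset.mem_inter.mp hn'mem).1
      have hn'gt : n < n' := Finset.mem_Ioi.mp (Finset.mem_inter.mp hn'mem).2
      have hsub : A ∩ Finset.Ioi n ⊆ insert n' (A ∩ Finset.Ioi n') := by
        intro x hx
        rcases eq_or_ne x n' with h | h
        · exact Finset.mem_insert.mpr (Or.inl h)
        · refine Finset.mem_insert.mpr (Or.inr ?_)
          refine Finset.mem_inter.mpr ⟨(Finset.mem_inter.mp hx).1, Finset.mem_Ioi.mpr ?_⟩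
          exact lt_of_le_of_ne (Finset.min'_le _ _ hx) (Ne.symm h)
      have hcard' : j ≤ (A ∩ Finset.Ioi n').card := by
        have h1 := Finset.card_le_card hsub
        have h2 := Finset.card_insert_le n' (A ∩ Finset.Ioi n')
        omega
      have hIH := ih n' hn'A hcard'
      have hTS : ∑ i ∈ Finset.Ici n', X i ≤ ∑ i ∈ Finset.Ioi n, X i := by
        apply Finset.sum_le_sum_of_subset_of_nonneg
        · intro x hx
          exact Finset.mem_Ioi.mpr (lt_of_lt_of_le hn'gt (Finset.mem_Ici.mp hx))
        · intro i _ _; exact hXpos i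
      have hcond : c * ∑ j ∈ Finset.Ioi n, X j ≤ X n := by
        have := (Finset.mem_filter.mp hnA).2
        simpa using this
      have hsum : ∑ i ∈ Finset.Ici n, X i = X n + ∑ i ∈ Finset.Ioi n, X i := by
        rw [← Finset.Ioi_insert, Finset.sum_insert (by simp)]
      rw [hsum]
      have h1 : (c + 1) * ((c + 1) ^ j * X last) ≤ (c + 1) * ∑ i ∈ Finset.Ioi n, X i :=
        mul_le_mul_of_nonneg_left (hIH.trans hTS) (by linarith)
      have hS0 : 0 ≤ ∑ i ∈ Finset.Ioi n, X i :=
        Finset.sum_nonneg fun i _ => hXpos i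
      rw [pow_succ]
      nlinarith [h1, hcond, hS0]
  rcases le_or_gt A.card 1 with hk | hk
  · refine le_trans ?_ (le_max_left _ _)
    exact_mod_cast hk
  · -- at least two indices
    have hAne : A.Nonempty := Finset.card_pos.mp (by omega)
    set n₁ := A.min' hAne with hn₁
    have hn₁A : n₁ ∈ A := Finset.min'_mem _ _
    have hsub1 : A ⊆ insert n₁ (A ∩ Finset.Ioi n₁) := by
      intro x hx
      rcases eq_or_ne x n₁ with h | h
      · exact Finset.mem_insert.mpr (Or.inl h)
      · refine Finset.mem_insert.mpr (Or.inr (Finset.mem_inter.mpr ⟨hx, Finset.mem_Ioi.mpr ?_⟩))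
        exact lt_of_le_of_ne (Finset.min'_le _ _ hx) (Ne.symm h)
    have hcard1 : A.card - 1 ≤ (A ∩ Finset.Ioi n₁).card := by
      have h1 := Finset.card_le_card hsub1
      have h2 := Finset.card_insert_le n₁ (A ∩ Finset.Ioi n₁)
      omega
    have hne2 : (A ∩ Finset.Ioi n₁).Nonempty := Finset.card_pos.mp (by omega)
    set n₂ := (A ∩ Finset.Ioi n₁).min' hne2 with hn₂
    have hn₂mem : n₂ ∈ A ∩ Finset.Ioi n₁ := Finset.min'_mem _ _
    have hn₂A : n₂ ∈ A := (Finset.mem_inter.mp hn₂mem).1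
    have hn₂gt : n₁ < n₂ := Finset.mem_Ioi.mp (Finset.mem_inter.mp hn₂mem).2
    have hsub2 : A ∩ Finset.Ioi n₁ ⊆ insert n₂ (A ∩ Finset.Ioi n₂) := by
      intro x hx
      rcases eq_or_ne x n₂ with h | h
      · exact Finset.mem_insert.mpr (Or.inl h)
      · refine Finset.mem_insert.mpr (Or.inr (Finset.mem_inter.mpr
          ⟨(Finset.mem_inter.mp hx).1, Finset.mem_Ioi.mpr ?_⟩))
        exact lt_of_le_of_ne (Finset.min'_le _ _ hx) (Ne.symm h)
    have hcard2 : A.card - 2 ≤ (A ∩ Finset.Ioi n₂).card := by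
      have h1 := Finset.card_le_card hsub2
      have h2 := Finset.card_insert_le n₂ (A ∩ Finset.Ioi n₂)
      omega
    have hkey := key (A.card - 2) n₂ hn₂A hcard2
    have hTS : ∑ i ∈ Finset.Ici n₂, X i ≤ ∑ i ∈ Finset.Ioi n₁, X i := by
      apply Finset.sum_le_sum_of_subset_of_nonneg
      · intro x hx
        exact Finset.mem_Ioi.mpr (lt_of_lt_of_le hn₂gt (Finset.mem_Ici.mp hx))
      · intro i _ _; exact hXpos i
    have hcond : c * ∑ j ∈ Finset.Ioi n₁, X j ≤ X n₁ := by
      have := (Finset.mem_filter.mp hn₁A).2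
      simpa using this
    have hXM : X n₁ ≤ M := Finset.le_sup' X (Finset.mem_univ n₁)
    have hMlb : c * ((c + 1) ^ (A.card - 2) * X last) ≤ M := by
      have h1 : c * ((c + 1) ^ (A.card - 2) * X last) ≤ c * ∑ i ∈ Finset.Ioi n₁, X i :=
        mul_le_mul_of_nonneg_left (hkey.trans hTS) (le_of_lt hc)
      linarith
    have hMpos : 0 < M := lt_of_lt_of_le
      (by positivity : (0:ℝ) < c * ((c + 1) ^ (A.card - 2) * X last)) hMlb
    have hL : 0 < Real.log (c + 1) := Real.log_pos (by linarith)
    -- turn into a log inequality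
    have hdiv : (c + 1) ^ (A.card - 2) ≤ M / (X last * c) := by
      rw [le_div_iff₀ (by positivity)]
      nlinarith [hMlb]
    have hlog : Real.log ((c + 1) ^ (A.card - 2)) ≤ Real.log (M / (X last * c)) :=
      Real.log_le_log (by positivity) hdiv
    rw [Real.log_pow] at hlog
    have hlogsplit : Real.log (M / (X last * c)) = Real.log (M / X last) - Real.log c := by
      rw [Real.log_div (ne_of_gt hMpos) (by positivity),
        Real.log_div (ne_of_gt hMpos) (ne_of_gt hXl),
        Real.log_mul (ne_of_gt hXl) (ne_of_gt hc)]
      ring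
    rw [hlogsplit] at hlog
    have hcast : ((A.card - 2 : ℕ) : ℝ) = (A.card : ℝ) - 2 := by
      have : 2 ≤ A.card := hk
      push_cast [Nat.cast_sub this]
      ring
    rw [hcast] at hlog
    refine le_trans ?_ (le_max_right _ _)
    have hdivle : (A.card : ℝ) - 2 ≤ (Real.log (M / X last) - Real.log c) / Real.log (c + 1) :=
      (le_div_iff₀ hL).mpr hlog
    have : (Real.log (M / X last) - Real.log c) / Real.log (c + 1)
        = Real.log (M / X last) / Real.log (c + 1) - Real.log c / Real.log (c + 1) := by
      ring
    linarith [hdivle, this.symm.le]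
end

section
/- Let $d$ be a lower semicontinuous metric on $\mathbb{C}$, let $x \in \mathbb{C}$ with some point at finite $d$-distance from $x$, and suppose there exists a sequence of disjoint $d$-continuous loops $\{\pi_n\}_{n \in \mathbb{N}}$, each disconnecting a Euclidean neighborhood of $x$ from $\infty$, such that the Euclidean radius of $\pi_n$, the $d$-length of $\pi_n$, and the $d$-distance from $x$ to $\pi_n$ all tend to $0$ as $n \to \infty$. Let $y \in \mathbb{C} \cup \{\infty\}$ with $d(x,y) > s > 0$ and suppose there is a $d$-geodesic $P$ from $x$ to $y$ (a $d$-length-minimizing path that is continuous for the Euclidean topology). Then the filled metric ball $\mathcal{B}_s^{y,\bullet}(x)$ contains a Euclidean ball of positive radius centered at $x$. -/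
open scoped ENNReal

/-- The `d`-length of the path `P` over `[a, b]`, defined as the supremum over partitions of
sums of consecutive distances. -/
noncomputable def pathLen (d : ℂ → ℂ → ℝ≥0∞) (P : ℝ → ℂ) (a b : ℝ) : ℝ≥0∞ :=
  ⨆ (n : ℕ) (t : Fin (n + 1) → ℝ) (_ : Monotone t) (_ : t 0 = a) (_ : t (Fin.last n) = b),
    ∑ i : Fin n, d (P (t i.castSucc)) (P (t i.succ))

/-- The filled metric ball `𝓑_s^{y,•}(x)`: the union of the closed `d`-ball of radius `s`
about `x` and the set of points which it disconnects from `y`, where `y : Option ℂ` with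
`none` representing `∞` (a point is disconnected from `∞` iff its connected component in the
complement of the ball is bounded). -/
def filledBall (d : ℂ → ℂ → ℝ≥0∞) (x : ℂ) (s : ℝ) (y : Option ℂ) : Set ℂ :=
  {z | d x z ≤ ENNReal.ofReal s} ∪
    y.elim
      {z | Bornology.IsBounded (connectedComponentIn {w | ¬ d x w ≤ ENNReal.ofReal s} z)}
      (fun y₀ => {z | z ∉ connectedComponentIn {w | ¬ d x w ≤ ENNReal.ofReal s} y₀})

/-!
Choose `n` so large that the loop `γ n` has `d`-length and `d`-distance to `x` below `s / 2` and
Euclidean diameter below `|x - y|`. By the triangle inequality the trace `K` of `γ n` lies in the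
closed `d`-ball of radius `s`, so every point of the bounded component `U` of `Kᶜ` containing `x`
is either in that ball or in a bounded component of its complement contained in `U`. A bounded
component of `Kᶜ` lies in the closed convex hull of `K` (a separating half-space avoiding `K` would
be connected and unbounded), so `diam U ≤ diam K < |x - y|`; hence `y ∉ U`, and it is separated
from the points of `U` outside the ball.
-/

open Set Filter

lemma apply_le_pathLen (d : ℂ → ℂ → ℝ≥0∞) (P : ℝ → ℂ) {a b c e : ℝ}
    (hab : a ≤ b) (hbc : b ≤ c) (hce : c ≤ e) :
    d (P b) (P c) ≤ pathLen d P a e := by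
  have hmono : Monotone ![a, b, c, e] := by
    rw [Fin.monotone_iff_le_succ]
    intro i
    fin_cases i <;> assumption
  have hsum : d (P b) (P c) ≤
      ∑ i : Fin 3, d (P (![a, b, c, e] i.castSucc)) (P (![a, b, c, e] i.succ)) := by
    rw [Fin.sum_univ_three]
    exact le_add_self.trans le_self_add
  exact hsum.trans <| le_iSup_of_le 3 <| le_iSup_of_le ![a, b, c, e] <|
    le_iSup_of_le hmono <| le_iSup_of_le rfl <| le_iSup_of_le rfl le_rfl

lemma apply_le_add_pathLen (d : ℂ → ℂ → ℝ≥0∞) (hsymm : ∀ z w, d z w = d w z)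
    (htri : ∀ z w u, d z u ≤ d z w + d w u) (x : ℂ) (P : ℝ → ℂ) {t₀ t : ℝ}
    (ht₀ : t₀ ∈ Icc (0 : ℝ) 1) (ht : t ∈ Icc (0 : ℝ) 1) :
    d x (P t) ≤ d x (P t₀) + pathLen d P 0 1 := by
  have hseg : d (P t₀) (P t) ≤ pathLen d P 0 1 := by
    rcases le_total t₀ t with h | h
    · exact apply_le_pathLen d P ht₀.1 h ht.2
    · rw [hsymm]
      exact apply_le_pathLen d P ht.1 h ht₀.2
  exact (htri _ _ _).trans (add_le_add le_rfl hseg)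

section ConnectedComponent

variable {E : Type*} [NormedAddCommGroup E] [NormedSpace ℝ E] [Nontrivial E]

lemma not_isBounded_halfSpace (f : E →L[ℝ] ℝ) {u : ℝ} {x : E} (hx : u < f x) :
    ¬ Bornology.IsBounded {w | u < f w} := by
  intro hb
  obtain ⟨v, hv0, hfv⟩ : ∃ v : E, v ≠ 0 ∧ 0 ≤ f v := by
    obtain ⟨w, hw⟩ := exists_ne (0 : E)
    rcases le_total 0 (f w) with h | h
    · exact ⟨w, hw, h⟩
    · exact ⟨-w, neg_ne_zero.2 hw, by simpa using h⟩
  obtain ⟨R, hR⟩ := isBounded_iff_forall_norm_le.1 hb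
  set t : ℝ := (R + ‖x‖ + 1) / ‖v‖
  have ht : 0 ≤ t := div_nonneg (by linarith [norm_nonneg x, hR x hx]) (norm_nonneg v)
  have hmem : x + t • v ∈ {w | u < f w} := by
    simp only [Set.mem_ofPred_eq, map_add, map_smul, smul_eq_mul]
    nlinarith
  have htv : ‖t • v‖ = R + ‖x‖ + 1 := by
    rw [norm_smul, Real.norm_of_nonneg ht, div_mul_cancel₀ _ (norm_ne_zero_iff.2 hv0)]
  have := norm_sub_le (x + t • v) x
  rw [add_sub_cancel_left, htv] at this
  linarith [hR _ hmem]

lemma connectedComponentIn_compl_subset_closure_convexHull {K : Set E} {x : E}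
    (hb : Bornology.IsBounded (connectedComponentIn Kᶜ x)) :
    connectedComponentIn Kᶜ x ⊆ closure (convexHull ℝ K) := by
  intro z hz
  by_contra hzC
  obtain ⟨f, u, hfu, huz⟩ := geometric_hahn_banach_closed_point
    (convex_convexHull ℝ K).closure isClosed_closure hzC
  have hHK : {w | u < f w} ⊆ Kᶜ := fun w hw hwK =>
    (hfu w (subset_closure (subset_convexHull ℝ K hwK))).not_gt hw
  have hHz : {w | u < f w} ⊆ connectedComponentIn Kᶜ x := by
    rw [connectedComponentIn_eq hz]
    exact (convex_halfSpace_gt f.isLinear u).isPreconnected.subset_connectedComponentIn huz hHK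
  exact not_isBounded_halfSpace f huz (hb.subset hHz)

lemma ediam_connectedComponentIn_compl_le {K : Set E} {x : E}
    (hb : Bornology.IsBounded (connectedComponentIn Kᶜ x)) :
    Metric.ediam (connectedComponentIn Kᶜ x) ≤ Metric.ediam K :=
  calc Metric.ediam (connectedComponentIn Kᶜ x)
      ≤ Metric.ediam (closure (convexHull ℝ K)) :=
        Metric.ediam_mono (connectedComponentIn_compl_subset_closure_convexHull hb)
    _ = Metric.ediam K := by rw [Metric.ediam_closure, convexHull_ediam]

end ConnectedComponent

lemma connectedComponentIn_subset_filledBall (d : ℂ → ℂ → ℝ≥0∞) {K : Set ℂ} {x : ℂ} {s : ℝ}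
    {y : Option ℂ} (hK : K ⊆ {z | d x z ≤ ENNReal.ofReal s})
    (hb : Bornology.IsBounded (connectedComponentIn Kᶜ x))
    (hy : ∀ y₀, y = some y₀ → ENNReal.ofReal s < d x y₀ ∧ Metric.ediam K < edist x y₀) :
    connectedComponentIn Kᶜ x ⊆ filledBall d x s y := by
  intro z hz
  by_cases hzB : d x z ≤ ENNReal.ofReal s
  · exact Or.inl hzB
  have hzU :
      connectedComponentIn {w | ¬ d x w ≤ ENNReal.ofReal s} z ⊆ connectedComponentIn Kᶜ x := by
    rw [connectedComponentIn_eq hz]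
    exact connectedComponentIn_mono z fun w hw hwK => hw (hK hwK)
  right
  rcases y with _ | y₀
  · exact hb.subset hzU
  · obtain ⟨hy₀B, hy₀K⟩ := hy y₀ rfl
    intro hzy
    have hy₀U : y₀ ∈ connectedComponentIn Kᶜ x := by
      apply hzU
      rw [← connectedComponentIn_eq hzy]
      exact mem_connectedComponentIn hy₀B.not_ge
    have hxU : x ∈ connectedComponentIn Kᶜ x :=
      mem_connectedComponentIn (connectedComponentIn_nonempty_iff.1 ⟨y₀, hy₀U⟩)
    exact hy₀K.not_ge <| (Metric.edist_le_ediam_of_mem hxU hy₀U).trans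
      (ediam_connectedComponentIn_compl_le hb)

theorem filled_ball_contains_euclidean_ball_general (d : ℂ → ℂ → ℝ≥0∞)
    (hrefl : ∀ z, d z z = 0)
    (hsymm : ∀ z w, d z w = d w z)
    (htri : ∀ z w u, d z u ≤ d z w + d w u)
    (x : ℂ)
    (γ : ℕ → ℝ → ℂ)
    (hsep : ∀ n, ∃ r : ℝ, 0 < r ∧ Metric.ball x r ⊆ (γ n '' Set.Icc (0:ℝ) 1)ᶜ ∧
      Bornology.IsBounded (connectedComponentIn (γ n '' Set.Icc (0:ℝ) 1)ᶜ x))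
    (hrad : Filter.Tendsto (fun n => Metric.ediam (γ n '' Set.Icc (0:ℝ) 1))
      Filter.atTop (nhds 0))
    (hlen : Filter.Tendsto (fun n => pathLen d (γ n) 0 1) Filter.atTop (nhds 0))
    (hdist : Filter.Tendsto (fun n => ⨅ t ∈ Set.Icc (0:ℝ) 1, d x (γ n t))
      Filter.atTop (nhds 0))
    (y : Option ℂ) (s : ℝ) (hs : 0 < s)
    (hy : ∀ y₀ : ℂ, y = some y₀ → ENNReal.ofReal s < d x y₀) :
    ∃ r : ℝ, 0 < r ∧ Metric.ball x r ⊆ filledBall d x s y := by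
  have hhalf : 0 < ENNReal.ofReal s / 2 := ENNReal.half_pos (ENNReal.ofReal_pos.2 hs).ne'
  have hfar : ∀ᶠ n in atTop, ∀ y₀, y = some y₀ →
      Metric.ediam (γ n '' Icc (0 : ℝ) 1) < edist x y₀ := by
    rcases y with _ | y₀
    · simp
    · have hxy : x ≠ y₀ := by
        rintro rfl
        simpa [hrefl] using hy x rfl
      filter_upwards [hrad.eventually_lt_const (edist_pos.2 hxy)] with n hn
      simpa using hn
  obtain ⟨n, hn_len, hn_dist, hn_far⟩ := ((hlen.eventually_lt_const hhalf).and
    ((hdist.eventually_lt_const hhalf).and hfar)).exists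
  obtain ⟨t₀, ht₀, hxt₀⟩ : ∃ t₀ ∈ Icc (0 : ℝ) 1, d x (γ n t₀) < ENNReal.ofReal s / 2 := by
    simpa only [iInf_lt_iff, exists_prop] using hn_dist
  have hK : γ n '' Icc (0 : ℝ) 1 ⊆ {z | d x z ≤ ENNReal.ofReal s} := by
    rintro _ ⟨t, ht, rfl⟩
    calc d x (γ n t) ≤ d x (γ n t₀) + pathLen d (γ n) 0 1 :=
          apply_le_add_pathLen d hsymm htri x (γ n) ht₀ ht
      _ ≤ ENNReal.ofReal s / 2 + ENNReal.ofReal s / 2 := add_le_add hxt₀.le hn_len.le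
      _ = ENNReal.ofReal s := ENNReal.add_halves _
  obtain ⟨r, hr, hball, hbdd⟩ := hsep n
  refine ⟨r, hr, ?_⟩
  calc Metric.ball x r ⊆ connectedComponentIn (γ n '' Icc (0 : ℝ) 1)ᶜ x :=
        (convex_ball x r).isPreconnected.subset_connectedComponentIn
          (Metric.mem_ball_self hr) hball
    _ ⊆ filledBall d x s y :=
        connectedComponentIn_subset_filledBall d hK hbdd fun y₀ h => ⟨hy y₀ h, hn_far y₀ h⟩

/-- If `x` is a non-singular point for a lower semicontinuous metric `d` on `ℂ`, admitting a
sequence of disjoint `d`-continuous loops separating a neighborhood of `x` from `∞` whose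
Euclidean radii, `d`-lengths and `d`-distances to `x` tend to `0`, and if there is a
`d`-geodesic from `x` to `y ∈ ℂ ∪ {∞}` with `d x y > s > 0`, then the filled metric ball
`𝓑_s^{y,•}(x)` contains a Euclidean ball of positive radius centered at `x`. -/
theorem filled_ball_contains_euclidean_ball (d : ℂ → ℂ → ℝ≥0∞)
    (hlsc : LowerSemicontinuous fun p : ℂ × ℂ => d p.1 p.2)
    (hrefl : ∀ z, d z z = 0)
    (hsymm : ∀ z w, d z w = d w z)
    (htri : ∀ z w u, d z u ≤ d z w + d w u)
    (x : ℂ) (hx : ∃ w : ℂ, w ≠ x ∧ d x w ≠ ⊤)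
    (γ : ℕ → ℝ → ℂ)
    (hloop : ∀ n, γ n 0 = γ n 1)
    (hdisj : Pairwise fun m n => Disjoint (γ m '' Set.Icc (0:ℝ) 1) (γ n '' Set.Icc (0:ℝ) 1))
    (hcont : ∀ n, ∀ t ∈ Set.Icc (0:ℝ) 1, ∀ ε : ℝ≥0∞, 0 < ε → ∃ δ : ℝ, 0 < δ ∧
      ∀ u ∈ Set.Icc (0:ℝ) 1, |u - t| < δ → d (γ n t) (γ n u) < ε)
    (hsep : ∀ n, ∃ r : ℝ, 0 < r ∧ Metric.ball x r ⊆ (γ n '' Set.Icc (0:ℝ) 1)ᶜ ∧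
      Bornology.IsBounded (connectedComponentIn (γ n '' Set.Icc (0:ℝ) 1)ᶜ x))
    (hrad : Filter.Tendsto (fun n => Metric.ediam (γ n '' Set.Icc (0:ℝ) 1))
      Filter.atTop (nhds 0))
    (hlen : Filter.Tendsto (fun n => pathLen d (γ n) 0 1) Filter.atTop (nhds 0))
    (hdist : Filter.Tendsto (fun n => ⨅ t ∈ Set.Icc (0:ℝ) 1, d x (γ n t))
      Filter.atTop (nhds 0))
    (y : Option ℂ) (s : ℝ) (hs : 0 < s)
    (hy : ∀ y₀ : ℂ, y = some y₀ → ENNReal.ofReal s < d x y₀)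
    (hgeo : ∃ (T : ℝ≥0∞) (P : ℝ → ℂ), P 0 = x ∧
      ContinuousOn P {t : ℝ | 0 ≤ t ∧ ENNReal.ofReal t ≤ T} ∧
      (∀ a b : ℝ, 0 ≤ a → a ≤ b → ENNReal.ofReal b ≤ T →
        d (P a) (P b) = ENNReal.ofReal (b - a)) ∧
      y.elim
        (T = ⊤ ∧ Filter.Tendsto (fun t => ‖P t‖) Filter.atTop Filter.atTop)
        (fun y₀ => T = d x y₀ ∧ ∀ t : ℝ, ENNReal.ofReal t = T → P t = y₀)) :
    ∃ r : ℝ, 0 < r ∧ Metric.ball x r ⊆ filledBall d x s y :=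
  filled_ball_contains_euclidean_ball_general d hrefl hsymm htri x γ hsep hrad hlen hdist y s hs hy
end
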